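/- arXiv:2502.06547 — 4 statements merged into one kernel-verified Lean document; each statement's English description precedes it below -/
import Mathlib

section
/- Assume the compatibility condition Π_L Π_G = Π_G Π_L and that R is continuously differentiable. Then for every A ∈ E one has Π_L ∇R^aug(A) = 0 if and only if Π_E ∇R(A) = 0. In other words, the set of points in E that are stationary for the augmented dynamics A' = −Π_L ∇R^aug(A) coincides with the set of points in E that are stationary for the equivariant dynamics A' = −Π_E ∇R(A). -/
open MeasureTheory InnerProductSpace RealInnerProductSpace

noncomputable section

/-- The fixed-point subspace `H_G = {v : ρ(g) v = v for all g}` of an orthogonal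
representation `ρ : G → O(V)`. -/
def fixedSubmodule {G V : Type*} [Group G] [NormedAddCommGroup V] [InnerProductSpace ℝ V]
    (ρ : G →* (V ≃ₗᵢ[ℝ] V)) : Submodule ℝ V where
  carrier := {v | ∀ g : G, ρ g v = v}
  add_mem' := by
    intro a b ha hb g
    simp [map_add, ha g, hb g]
  zero_mem' := by
    intro g
    simp
  smul_mem' := by
    intro c a ha g
    rw [_root_.map_smul, ha g]

/-- The orthogonal projection onto a subspace `K`, as a map `V → V`. -/
def projSub {V : Type*} [NormedAddCommGroup V] [InnerProductSpace ℝ V] (K : Submodule ℝ V)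
    [K.HasOrthogonalProjection] : V →L[ℝ] V :=
  K.subtypeL.comp K.orthogonalProjectionOnto

/-- The augmented risk `R^aug(A) = ∫_G R(ρ(g) A) dμ(g)`. -/
def augRisk {G V : Type*} [Group G] [MeasurableSpace G]
    [NormedAddCommGroup V] [InnerProductSpace ℝ V]
    (μ : Measure G) (ρ : G →* (V ≃ₗᵢ[ℝ] V)) (R : V → ℝ) : V → ℝ :=
  fun A => ∫ g, R (ρ g A) ∂μ

/-- The Hessian of `f : V → ℝ` at `A`, regarded as a linear map `V → V`
(the derivative of the gradient field). -/
def hess {V : Type*} [NormedAddCommGroup V] [InnerProductSpace ℝ V] [CompleteSpace V]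
    (f : V → ℝ) (A : V) : V →L[ℝ] V :=
  fderiv ℝ (gradient f) A

/-! Differentiating under the integral sign, at a `G`-fixed point `A` one gets
`D R^aug(A) v = ∫ ⟪∇R(A), ρ(g) v⟫ dμ(g)`, and averaging `ρ(g) v` against the Haar probability
measure is the orthogonal projection `Π_G v`; so `∇R^aug(A) = Π_G ∇R(A)` by self-adjointness
of `Π_G`. Commuting orthogonal projections multiply to the projection onto the intersection of
their ranges, hence `Π_L ∇R^aug(A) = Π_L Π_G ∇R(A) = Π_E ∇R(A)`. -/

theorem Submodule.starProjection_comp_starProjection_eq_inf {𝕜 E : Type*} [RCLike 𝕜]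
    [NormedAddCommGroup E] [InnerProductSpace 𝕜 E] (K L : Submodule 𝕜 E)
    [K.HasOrthogonalProjection] [L.HasOrthogonalProjection] [(K ⊓ L).HasOrthogonalProjection]
    (hKL : L.starProjection ∘L K.starProjection = K.starProjection ∘L L.starProjection) :
    L.starProjection ∘L K.starProjection = (K ⊓ L).starProjection := by
  ext w
  have hK : L.starProjection (K.starProjection w) ∈ K := by
    rw [← ContinuousLinearMap.comp_apply, hKL]
    exact K.starProjection_apply_mem _
  have hL : L.starProjection (K.starProjection w) ∈ L := L.starProjection_apply_mem _
  refine (eq_starProjection_of_mem_of_inner_eq_zero (mem_inf.mpr ⟨hK, hL⟩) fun u hu => ?_).symm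
  rw [← sub_add_sub_cancel w (K.starProjection w), inner_add_left,
    K.starProjection_inner_eq_zero w u (mem_inf.mp hu).1,
    L.starProjection_inner_eq_zero _ u (mem_inf.mp hu).2, add_zero]

section AugmentedRisk

variable {G V : Type*} [Group G] [TopologicalSpace G] [CompactSpace G] [MeasurableSpace G]
    [OpensMeasurableSpace G] [NormedAddCommGroup V] [InnerProductSpace ℝ V]
    [FiniteDimensional ℝ V] (μ : Measure G) (ρ : G →* (V ≃ₗᵢ[ℝ] V))

theorem hasFDerivAt_augRisk [IsFiniteMeasure μ] (hρ : ∀ v, Continuous fun g => ρ g v)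
    {R : V → ℝ} (hR : ContDiff ℝ 1 R) (A : V) :
    HasFDerivAt (augRisk μ ρ R) (∫ g, fderiv ℝ R (ρ g A) ∘L (ρ g : V →L[ℝ] V) ∂μ) A := by
  have hρL : Continuous fun g => (ρ g : V →L[ℝ] V) := continuous_clm_apply.2 hρ
  have hR' : Continuous (fderiv ℝ R) := hR.continuous_fderiv one_ne_zero
  obtain ⟨C, hC⟩ : ∃ C, ∀ x ∈ Metric.closedBall (0 : V) (‖A‖ + 1), ‖fderiv ℝ R x‖ ≤ C :=
    (isCompact_closedBall _ _).exists_bound_of_continuousOn hR'.continuousOn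
  refine hasFDerivAt_integral_of_dominated_of_fderiv_le (bound := fun _ => C)
    (Metric.ball_mem_nhds A one_pos)
    (.of_forall fun x => (hR.continuous.comp (hρ x)).aestronglyMeasurable)
    ((hR.continuous.comp (hρ A)).integrable_of_hasCompactSupport (.of_compactSpace _))
    ((hR'.comp (hρ A)).clm_comp hρL).aestronglyMeasurable
    (ae_of_all _ fun g x hx => ?_) (integrable_const C)
    (ae_of_all _ fun g x _ =>
      ((hR.differentiable one_ne_zero _).hasFDerivAt.comp x (ρ g : V →L[ℝ] V).hasFDerivAt))
  have hx : ρ g x ∈ Metric.closedBall (0 : V) (‖A‖ + 1) := by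
    rw [mem_closedBall_zero_iff, LinearIsometryEquiv.norm_map]
    have := norm_le_norm_add_norm_sub' x A
    rw [← dist_eq_norm] at this
    linarith [Metric.mem_ball.mp hx]
  calc ‖fderiv ℝ R (ρ g x) ∘L (ρ g : V →L[ℝ] V)‖
      ≤ ‖fderiv ℝ R (ρ g x)‖ * ‖(ρ g : V →L[ℝ] V)‖ := ContinuousLinearMap.opNorm_comp_le _ _
    _ ≤ C * 1 := by
        gcongr
        · exact (norm_nonneg _).trans (hC _ hx)
        · exact hC _ hx
        · exact (ρ g).toLinearIsometry.norm_toContinuousLinearMap_le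
    _ = C := mul_one C

theorem integral_apply_eq_starProjection_fixedSubmodule [MeasurableMul G]
    [IsProbabilityMeasure μ] [μ.IsMulLeftInvariant] (hρ : ∀ v, Continuous fun g => ρ g v)
    (v : V) :
    ∫ g, ρ g v ∂μ = (fixedSubmodule ρ).starProjection v := by
  have hmem : ∫ g, ρ g v ∂μ ∈ fixedSubmodule ρ := fun h => by
    calc ρ h (∫ g, ρ g v ∂μ) = ∫ g, ρ (h * g) v ∂μ := by
          simp only [map_mul, LinearIsometryEquiv.coe_mul, Function.comp_apply]
          exact ((ρ h).toLinearIsometry.integral_comp_comm _).symm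
      _ = ∫ g, ρ g v ∂μ := integral_mul_left_eq_self (fun g => ρ g v) h
  refine (Submodule.eq_starProjection_of_mem_of_inner_eq_zero hmem fun w hw => ?_).symm
  have hint : Integrable (fun g => ρ g v) μ :=
    (hρ v).integrable_of_hasCompactSupport (.of_compactSpace _)
  have hinv : ∀ g, ⟪w, ρ g v⟫ = ⟪w, v⟫ := fun g => by
    conv_lhs => rw [← hw g]
    exact (ρ g).inner_map_map w v
  have : ⟪w, ∫ g, ρ g v ∂μ⟫ = ⟪w, v⟫ := by
    rw [← integral_inner hint, funext hinv, integral_const, probReal_univ, one_smul]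
  rw [inner_sub_left, real_inner_comm w v, real_inner_comm w, this, sub_self]

theorem hasGradientAt_augRisk_of_mem_fixedSubmodule [MeasurableMul G]
    [IsProbabilityMeasure μ] [μ.IsMulLeftInvariant] (hρ : ∀ v, Continuous fun g => ρ g v)
    {R : V → ℝ} (hR : ContDiff ℝ 1 R) {A : V} (hA : A ∈ fixedSubmodule ρ) :
    HasGradientAt (augRisk μ ρ R) ((fixedSubmodule ρ).starProjection (gradient R A)) A := by
  have hderiv := hasFDerivAt_augRisk μ ρ hρ hR A
  simp only [hA _] at hderiv
  refine hasGradientAt_iff_hasFDerivAt.2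
    (hderiv.congr_fderiv (ContinuousLinearMap.ext fun v => ?_))
  have hint : Integrable (fun g => fderiv ℝ R A ∘L (ρ g : V →L[ℝ] V)) μ :=
    (continuous_const.clm_comp (continuous_clm_apply.2 hρ)).integrable_of_hasCompactSupport
      (.of_compactSpace _)
  rw [ContinuousLinearMap.integral_apply hint, toDual_apply_apply,
    Submodule.inner_starProjection_left_eq_right,
    ← integral_apply_eq_starProjection_fixedSubmodule μ ρ hρ, ← integral_inner]
  · simp only [ContinuousLinearMap.comp_apply, ContinuousLinearEquiv.coe_coe,
      LinearIsometryEquiv.coe_toContinuousLinearEquiv, ← toDual_gradient, toDual_apply_apply]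
  · exact (hρ v).integrable_of_hasCompactSupport (.of_compactSpace _)

end AugmentedRisk

/-- Under the compatibility condition, a point of `E` is stationary for the
augmented dynamics `A' = -Π_L ∇R^aug(A)` iff it is stationary for the equivariant
dynamics `A' = -Π_E ∇R(A)`. -/
theorem stationary_points_agree
    {G V : Type*} [Group G] [TopologicalSpace G] [IsTopologicalGroup G] [CompactSpace G]
    [MeasurableSpace G] [BorelSpace G]
    [NormedAddCommGroup V] [InnerProductSpace ℝ V] [FiniteDimensional ℝ V]
    (μ : Measure G) [μ.IsHaarMeasure] [IsProbabilityMeasure μ]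
    (ρ : G →* (V ≃ₗᵢ[ℝ] V)) (hρ : Continuous fun p : G × V => ρ p.1 p.2)
    (L : Submodule ℝ V)
    (hcompat : (projSub L).comp (projSub (fixedSubmodule ρ)) =
      (projSub (fixedSubmodule ρ)).comp (projSub L))
    (R : V → ℝ) (hR : ContDiff ℝ 1 R)
    (A : V) (hA : A ∈ fixedSubmodule ρ ⊓ L) :
    projSub L (gradient (augRisk μ ρ R) A) = 0 ↔
      projSub (fixedSubmodule ρ ⊓ L) (gradient R A) = 0 := by
  have hρ' : ∀ v, Continuous fun g => ρ g v := fun v => hρ.comp (.prodMk_left v)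
  have hgrad := (hasGradientAt_augRisk_of_mem_fixedSubmodule μ ρ hρ' hR
    (Submodule.mem_inf.mp hA).1).gradient
  have hproj := congr($(Submodule.starProjection_comp_starProjection_eq_inf _ _ hcompat)
    (gradient R A))
  change L.starProjection _ = 0 ↔ (fixedSubmodule ρ ⊓ L).starProjection _ = 0
  rw [hgrad, ← hproj, ContinuousLinearMap.comp_apply]
end
end

section
/- (Fact A) Assume the compatibility condition Π_L Π_G = Π_G Π_L and that R is continuously differentiable. Then for every A ∈ E one has Π_L ∇R^aug(A) = Π_E ∇R(A); in particular, when restricted to E the augmented projected gradient field and the equivariant projected gradient field coincide. -/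
open MeasureTheory InnerProductSpace RealInnerProductSpace

noncomputable section

/-!
Differentiating under the integral sign and using that each `ρ g` fixes `A` gives
`⟪∇R^aug(A), v⟫ = ∫ DR(A)(ρ g v) dμ = DR(A)(∫ ρ g v dμ)`. By invariance of the Haar measure the
average `∫ ρ g v dμ` lies in `H_G`, and since the `ρ g` are isometries fixing `H_G` pointwise,
`v` minus it is orthogonal to `H_G`; so averaging is the self-adjoint projection `Π_G`, and
`∇R^aug(A) = Π_G ∇R(A)`. Finally, commuting orthogonal projections compose to the projection
onto the intersection: `Π_L Π_G = Π_E`.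
-/

section Projection

variable {V : Type*} [NormedAddCommGroup V] [InnerProductSpace ℝ V]

theorem projSub_eq_starProjection (K : Submodule ℝ V) [K.HasOrthogonalProjection] :
    projSub K = K.starProjection :=
  rfl

theorem projSub_inf_of_comp_comm {K K' : Submodule ℝ V} [K.HasOrthogonalProjection]
    [K'.HasOrthogonalProjection] [(K ⊓ K').HasOrthogonalProjection]
    (h : (projSub K').comp (projSub K) = (projSub K).comp (projSub K')) :
    projSub (K ⊓ K') = (projSub K').comp (projSub K) := by
  simp only [projSub_eq_starProjection] at h ⊢
  ext v
  refine (K ⊓ K').eq_starProjection_of_mem_of_inner_eq_zero ⟨?_, ?_⟩ fun u hu => ?_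
  · rw [h]
    exact K.starProjection_apply_mem _
  · exact K'.starProjection_apply_mem _
  · rw [inner_sub_left, ContinuousLinearMap.comp_apply, K'.inner_starProjection_left_eq_right,
      K'.starProjection_eq_self_iff.mpr hu.2, K.inner_starProjection_left_eq_right,
      K.starProjection_eq_self_iff.mpr hu.1, sub_self]

end Projection

theorem Continuous.integrable_of_compactSpace {X E : Type*} [TopologicalSpace X] [CompactSpace X]
    [MeasurableSpace X] [OpensMeasurableSpace X] [NormedAddCommGroup E] {μ : Measure X}
    [IsFiniteMeasure μ] {f : X → E} (hf : Continuous f) : Integrable f μ :=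
  hf.integrable_of_hasCompactSupport (.of_compactSpace f)

theorem LinearIsometry.continuous_toContinuousLinearMap_of_apply {G V : Type*}
    [TopologicalSpace G] [NormedAddCommGroup V] [NormedSpace ℝ V] [FiniteDimensional ℝ V]
    {T : G → V →ₗᵢ[ℝ] V} (hT : ∀ v, Continuous fun g => T g v) :
    Continuous fun g => (T g).toContinuousLinearMap :=
  continuous_clm_apply.2 hT

theorem hasFDerivAt_integral_comp_linearIsometry {G V F : Type*} [TopologicalSpace G]
    [CompactSpace G] [MeasurableSpace G] [OpensMeasurableSpace G] [NormedAddCommGroup V]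
    [NormedSpace ℝ V] [FiniteDimensional ℝ V] [NormedAddCommGroup F] [NormedSpace ℝ F]
    [CompleteSpace F] (μ : Measure G) [IsFiniteMeasure μ] {T : G → V →ₗᵢ[ℝ] V}
    (hT : ∀ v, Continuous fun g => T g v) {R : V → F} (hR : ContDiff ℝ 1 R) (A : V) :
    HasFDerivAt (fun x => ∫ g, R (T g x) ∂μ)
      (∫ g, (fderiv ℝ R (T g A)).comp (T g).toContinuousLinearMap ∂μ) A := by
  have hDR : Continuous (fderiv ℝ R) := hR.continuous_fderiv one_ne_zero
  obtain ⟨C, hC⟩ := (isCompact_closedBall (0 : V) (‖A‖ + 1)).exists_bound_of_continuousOn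
    hDR.continuousOn
  refine hasFDerivAt_integral_of_dominated_of_fderiv_le (bound := fun _ => C)
    (F' := fun x g => (fderiv ℝ R (T g x)).comp (T g).toContinuousLinearMap)
    (Metric.closedBall_mem_nhds A one_pos)
    (.of_forall fun x => (hR.continuous.comp (hT x)).integrable_of_compactSpace.1)
    (hR.continuous.comp (hT A)).integrable_of_compactSpace
    ((hDR.comp (hT A)).clm_comp
      (LinearIsometry.continuous_toContinuousLinearMap_of_apply hT)).integrable_of_compactSpace.1
    (.of_forall fun g x hx => ?_) (integrable_const C)
    (.of_forall fun g x _ => ?_)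
  · have hmem : T g x ∈ Metric.closedBall (0 : V) (‖A‖ + 1) := by
      rw [mem_closedBall_zero_iff, (T g).norm_map]
      exact norm_le_of_mem_closedBall hx
    calc ‖(fderiv ℝ R (T g x)).comp (T g).toContinuousLinearMap‖
        ≤ ‖fderiv ℝ R (T g x)‖ * ‖(T g).toContinuousLinearMap‖ :=
          ContinuousLinearMap.opNorm_comp_le _ _
      _ ≤ C := (mul_le_of_le_one_right (norm_nonneg _)
          (T g).norm_toContinuousLinearMap_le).trans (hC _ hmem)
  · exact ((hR.differentiable one_ne_zero) (T g x)).hasFDerivAt.comp x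
      (T g).toContinuousLinearMap.hasFDerivAt

theorem mem_fixedSubmodule {G V : Type*} [Group G] [NormedAddCommGroup V]
    [InnerProductSpace ℝ V] {ρ : G →* (V ≃ₗᵢ[ℝ] V)} {v : V} :
    v ∈ fixedSubmodule ρ ↔ ∀ g, ρ g v = v :=
  Iff.rfl

section Averaging

variable {G V : Type*} [Group G] [TopologicalSpace G] [CompactSpace G] [MeasurableSpace G]
  [OpensMeasurableSpace G] [MeasurableMul G] [NormedAddCommGroup V] [InnerProductSpace ℝ V]

theorem integral_apply_eq_projSub_fixedSubmodule [CompleteSpace V] (μ : Measure G)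
    [μ.IsMulLeftInvariant] [IsProbabilityMeasure μ] (ρ : G →* (V ≃ₗᵢ[ℝ] V))
    [(fixedSubmodule ρ).HasOrthogonalProjection] (hρ : ∀ v, Continuous fun g => ρ g v) (v : V) :
    ∫ g, ρ g v ∂μ = projSub (fixedSubmodule ρ) v := by
  refine ((fixedSubmodule ρ).eq_starProjection_of_mem_of_inner_eq_zero (fun h => ?_)
    fun u hu => ?_).symm
  · calc ρ h (∫ g, ρ g v ∂μ) = ∫ g, ρ h (ρ g v) ∂μ :=
          ((ρ h).toLinearIsometry.integral_comp_comm _).symm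
      _ = ∫ g, ρ (h * g) v ∂μ := by simp
      _ = ∫ g, ρ g v ∂μ := integral_mul_left_eq_self (fun g => ρ g v) h
  · have hinv : ∀ g, ⟪u, ρ g v⟫ = ⟪u, v⟫ := fun g => by
      conv_lhs => rw [← mem_fixedSubmodule.mp hu g]
      exact (ρ g).inner_map_map u v
    rw [inner_sub_left, real_inner_comm u, real_inner_comm u,
      ← integral_inner (hρ v).integrable_of_compactSpace]
    simp [hinv]

theorem gradient_augRisk_of_mem_fixedSubmodule [FiniteDimensional ℝ V] (μ : Measure G)
    [μ.IsMulLeftInvariant] [IsProbabilityMeasure μ] (ρ : G →* (V ≃ₗᵢ[ℝ] V))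
    (hρ : ∀ v, Continuous fun g => ρ g v) {R : V → ℝ} (hR : ContDiff ℝ 1 R) {A : V}
    (hA : A ∈ fixedSubmodule ρ) :
    gradient (augRisk μ ρ R) A = projSub (fixedSubmodule ρ) (gradient R A) := by
  have hD := hasFDerivAt_integral_comp_linearIsometry μ
    (T := fun g => (ρ g).toLinearIsometry) hρ hR A
  simp only [LinearIsometryEquiv.coe_toLinearIsometry, mem_fixedSubmodule.mp hA] at hD
  have hint : Continuous fun g => (ρ g).toLinearIsometry.toContinuousLinearMap :=
    LinearIsometry.continuous_toContinuousLinearMap_of_apply hρ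
  have key : (∫ g, (fderiv ℝ R A).comp (ρ g).toLinearIsometry.toContinuousLinearMap ∂μ) =
      toDual ℝ V (projSub (fixedSubmodule ρ) (gradient R A)) := by
    ext v
    rw [ContinuousLinearMap.integral_apply
      (continuous_const.clm_comp hint).integrable_of_compactSpace v]
    calc ∫ g, fderiv ℝ R A (ρ g v) ∂μ = fderiv ℝ R A (∫ g, ρ g v ∂μ) :=
          (fderiv ℝ R A).integral_comp_comm (hρ v).integrable_of_compactSpace
      _ = ⟪gradient R A, projSub (fixedSubmodule ρ) v⟫ := by
          rw [integral_apply_eq_projSub_fixedSubmodule μ ρ hρ, inner_gradient_left]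
      _ = _ := (fixedSubmodule ρ).inner_starProjection_left_eq_right _ _ |>.symm
  rw [key] at hD
  exact hasGradientAt_iff_hasFDerivAt.2 hD |>.gradient

end Averaging

/-- Fact A: Under the compatibility condition, for every `A ∈ E` the
augmented projected gradient coincides with the equivariant projected gradient:
`Π_L ∇R^aug(A) = Π_E ∇R(A)`. -/
theorem factA
    {G V : Type*} [Group G] [TopologicalSpace G] [IsTopologicalGroup G] [CompactSpace G]
    [MeasurableSpace G] [BorelSpace G]
    [NormedAddCommGroup V] [InnerProductSpace ℝ V] [FiniteDimensional ℝ V]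
    (μ : Measure G) [μ.IsHaarMeasure] [IsProbabilityMeasure μ]
    (ρ : G →* (V ≃ₗᵢ[ℝ] V)) (hρ : Continuous fun p : G × V => ρ p.1 p.2)
    (L : Submodule ℝ V)
    (hcompat : (projSub L).comp (projSub (fixedSubmodule ρ)) =
      (projSub (fixedSubmodule ρ)).comp (projSub L))
    (R : V → ℝ) (hR : ContDiff ℝ 1 R)
    (A : V) (hA : A ∈ fixedSubmodule ρ ⊓ L) :
    projSub L (gradient (augRisk μ ρ R) A) = projSub (fixedSubmodule ρ ⊓ L) (gradient R A) := by
  have hρ_apply : ∀ v, Continuous fun g => ρ g v := fun v => hρ.comp (.prodMk_left v)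
  rw [gradient_augRisk_of_mem_fixedSubmodule μ ρ hρ_apply hR hA.1, projSub_inf_of_comp_comm hcompat,
    ContinuousLinearMap.comp_apply]
end
end

section
/- (Fact B) Assume the compatibility condition Π_L Π_G = Π_G Π_L and that R is twice continuously differentiable. Then for every A ∈ E and every Y ∈ TE^⊥, the vector Π_L (R^aug)''(A) Y belongs to TE^⊥, where (R^aug)''(A) denotes the Hessian of R^aug at A regarded as a self-adjoint linear map on V. -/
open MeasureTheory InnerProductSpace RealInnerProductSpace

noncomputable section

open ContinuousLinearMap

/-! On a compact group the Haar probability measure is also right invariant, so `R^aug` is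
`G`-invariant and at a fixed point `A` its Hessian `H` commutes with every `ρ g`. Then so does
`H†`, which therefore maps `H_G` into itself, and hence `H` maps `H_Gᗮ` into itself. Commuting
projections give `L ⊓ Eᗮ ≤ H_Gᗮ` (for `w ∈ H_G`, `Π_L w = Π_G Π_L w` lies in `E`), and `Π_L`
maps `H_Gᗮ` into `L ⊓ Eᗮ` because it fixes `E`. -/

namespace MeasureTheory.Measure

theorem isMulRightInvariant_of_isProbabilityMeasure {G : Type*} [Group G] [TopologicalSpace G]
    [IsTopologicalGroup G] [LocallyCompactSpace G] [MeasurableSpace G] [BorelSpace G]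
    (μ : Measure G) [μ.IsHaarMeasure] [IsProbabilityMeasure μ] : μ.IsMulRightInvariant := by
  refine ⟨fun g => ?_⟩
  have : IsProbabilityMeasure (μ.map (· * g)) :=
    isProbabilityMeasure_map (continuous_mul_const g).measurable.aemeasurable
  exact isHaarMeasure_eq_of_isProbabilityMeasure _ μ

end MeasureTheory.Measure

theorem augRisk_map {G V : Type*} [Group G] [MeasurableSpace G] [MeasurableMul G]
    [NormedAddCommGroup V] [InnerProductSpace ℝ V]
    (μ : Measure G) [μ.IsMulRightInvariant] (ρ : G →* (V ≃ₗᵢ[ℝ] V)) (R : V → ℝ) (g : G) (x : V) :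
    augRisk μ ρ R (ρ g x) = augRisk μ ρ R x := by
  have hmul : ∀ h, ρ h (ρ g x) = ρ (h * g) x := fun h => by rw [map_mul]; rfl
  simp only [augRisk, hmul]
  exact integral_mul_right_eq_self (fun h => R (ρ h x)) g

theorem fderiv_comp_linearIsometryEquiv {𝕜 E F G : Type*} [NontriviallyNormedField 𝕜]
    [NormedAddCommGroup E] [NormedSpace 𝕜 E] [NormedAddCommGroup F] [NormedSpace 𝕜 F]
    [NormedAddCommGroup G] [NormedSpace 𝕜 G]
    (f : F → G) (e : E ≃ₗᵢ[𝕜] F) (x : E) :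
    fderiv 𝕜 (f ∘ e) x = (fderiv 𝕜 f (e x)).comp (e : E →L[𝕜] F) :=
  e.toContinuousLinearEquiv.comp_right_fderiv (f := f) (x := x)

theorem gradient_comp_linearIsometryEquiv {𝕜 E F : Type*} [RCLike 𝕜] [NormedAddCommGroup E]
    [InnerProductSpace 𝕜 E] [CompleteSpace E] [NormedAddCommGroup F] [InnerProductSpace 𝕜 F]
    [CompleteSpace F] (f : F → 𝕜) (e : E ≃ₗᵢ[𝕜] F) (x : E) :
    gradient (f ∘ e) x = e.symm (gradient f (e x)) := by
  refine ext_inner_right 𝕜 fun v => ?_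
  rw [inner_gradient_left, ← e.inner_map_map, e.apply_symm_apply, inner_gradient_left,
    fderiv_comp_linearIsometryEquiv]
  rfl

section Hessian

variable {V : Type*} [NormedAddCommGroup V] [InnerProductSpace ℝ V] [CompleteSpace V]

theorem gradient_map_of_invariant {f : V → ℝ} {e : V ≃ₗᵢ[ℝ] V} (hf : ∀ x, f (e x) = f x) (x : V) :
    gradient f (e x) = e (gradient f x) := by
  have h := gradient_comp_linearIsometryEquiv f e x
  rw [show f ∘ e = f from funext hf] at h
  rw [h, e.apply_symm_apply]

theorem hess_map_of_invariant {f : V → ℝ} {e : V ≃ₗᵢ[ℝ] V} (hf : ∀ x, f (e x) = f x) {A : V}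
    (hA : e A = A) (v : V) : hess f A (e v) = e (hess f A v) := by
  have hcomm : gradient f ∘ e = e ∘ gradient f := funext (gradient_map_of_invariant hf)
  have h := congrArg (fderiv ℝ · A) hcomm
  simp only [e.comp_fderiv, fderiv_comp_linearIsometryEquiv, hA] at h
  exact congrArg (· v) h

end Hessian

theorem adjoint_map_of_commute {𝕜 E : Type*} [RCLike 𝕜] [NormedAddCommGroup E]
    [InnerProductSpace 𝕜 E] [CompleteSpace E] (T : E →L[𝕜] E) (e : E ≃ₗᵢ[𝕜] E)
    (h : ∀ v, T (e v) = e (T v)) (w : E) : adjoint T (e w) = e (adjoint T w) := by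
  have h_symm : ∀ v, T (e.symm v) = e.symm (T v) := fun v =>
    e.eq_symm_apply.2 (by rw [← h, e.apply_symm_apply])
  refine ext_inner_right 𝕜 fun v => ?_
  rw [adjoint_inner_left, e.inner_map_eq_flip, ← h_symm, ← adjoint_inner_left,
    ← e.inner_map_eq_flip]

section Representation

variable {G V : Type*} [Group G] [NormedAddCommGroup V] [InnerProductSpace ℝ V]
  (ρ : G →* (V ≃ₗᵢ[ℝ] V)) (T : V →L[ℝ] V)

theorem fixedSubmodule_mem_invtSubmodule (hT : ∀ g v, T (ρ g v) = ρ g (T v)) :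
    fixedSubmodule ρ ∈ Module.End.invtSubmodule T :=
  (Module.End.mem_invtSubmodule_iff_forall_mem_of_mem _).2 fun w hw g => by
    simp only [coe_coe, ← hT, hw g]

theorem orthogonal_fixedSubmodule_mem_invtSubmodule [CompleteSpace V]
    (hT : ∀ g v, T (ρ g v) = ρ g (T v)) :
    (fixedSubmodule ρ)ᗮ ∈ Module.End.invtSubmodule T :=
  orthogonal_mem_invtSubmodule <|
    fixedSubmodule_mem_invtSubmodule ρ _ fun g => adjoint_map_of_commute T (ρ g) (hT g)

end Representation

namespace Submodule

variable {𝕜 E : Type*} [RCLike 𝕜] [NormedAddCommGroup E] [InnerProductSpace 𝕜 E]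

theorem inf_orthogonal_inf_le_orthogonal {K L : Submodule 𝕜 E} [K.HasOrthogonalProjection]
    [L.HasOrthogonalProjection]
    (h : L.starProjection ∘L K.starProjection = K.starProjection ∘L L.starProjection) :
    L ⊓ (K ⊓ L)ᗮ ≤ Kᗮ := by
  rintro y ⟨hyL, hy⟩ w hw
  have hLw : L.starProjection w ∈ K ⊓ L := by
    refine ⟨?_, L.starProjection_apply_mem w⟩
    rw [← starProjection_eq_self_iff.2 hw, ← comp_apply, h]
    exact K.starProjection_apply_mem _
  rw [← starProjection_eq_self_iff.2 hyL, ← inner_starProjection_left_eq_right]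
  exact hy _ hLw

theorem starProjection_mem_inf_orthogonal (L : Submodule 𝕜 E) [L.HasOrthogonalProjection]
    {K : Submodule 𝕜 E} {z : E} (hz : z ∈ Kᗮ) :
    L.starProjection z ∈ L ⊓ (K ⊓ L)ᗮ :=
  ⟨L.starProjection_apply_mem z, fun u hu => by
    rw [← inner_starProjection_left_eq_right, starProjection_eq_self_iff.2 hu.2]
    exact hz u hu.1⟩

end Submodule

theorem factB_general
    {G V : Type*} [Group G] [TopologicalSpace G] [IsTopologicalGroup G] [CompactSpace G]
    [MeasurableSpace G] [BorelSpace G]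
    [NormedAddCommGroup V] [InnerProductSpace ℝ V] [FiniteDimensional ℝ V]
    (μ : Measure G) [μ.IsHaarMeasure] [IsProbabilityMeasure μ]
    (ρ : G →* (V ≃ₗᵢ[ℝ] V))
    (L : Submodule ℝ V)
    (hcompat : (projSub L).comp (projSub (fixedSubmodule ρ)) =
      (projSub (fixedSubmodule ρ)).comp (projSub L))
    (R : V → ℝ)
    (A : V) (hA : A ∈ fixedSubmodule ρ ⊓ L)
    (Y : V) (hY : Y ∈ L ⊓ (fixedSubmodule ρ ⊓ L)ᗮ) :
    projSub L ((hess (augRisk μ ρ R) A) Y) ∈ L ⊓ (fixedSubmodule ρ ⊓ L)ᗮ := by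
  have : μ.IsMulRightInvariant := μ.isMulRightInvariant_of_isProbabilityMeasure
  have hinvt : (fixedSubmodule ρ)ᗮ ∈ Module.End.invtSubmodule (hess (augRisk μ ρ R) A) :=
    orthogonal_fixedSubmodule_mem_invtSubmodule ρ _ fun g =>
      hess_map_of_invariant (augRisk_map μ ρ R g) (hA.1 g)
  have hY_orth : Y ∈ (fixedSubmodule ρ)ᗮ := Submodule.inf_orthogonal_inf_le_orthogonal hcompat hY
  exact L.starProjection_mem_inf_orthogonal (hinvt hY_orth)

/-- Fact B: Under the compatibility condition, for `A ∈ E` and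
`Y ∈ TEᗮ` (the orthogonal complement of `E` within `L`), the vector
`Π_L (R^aug)''(A) Y` belongs to `TEᗮ`. -/
theorem factB
    {G V : Type*} [Group G] [TopologicalSpace G] [IsTopologicalGroup G] [CompactSpace G]
    [MeasurableSpace G] [BorelSpace G]
    [NormedAddCommGroup V] [InnerProductSpace ℝ V] [FiniteDimensional ℝ V]
    (μ : Measure G) [μ.IsHaarMeasure] [IsProbabilityMeasure μ]
    (ρ : G →* (V ≃ₗᵢ[ℝ] V)) (hρ : Continuous fun p : G × V => ρ p.1 p.2)
    (L : Submodule ℝ V)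
    (hcompat : (projSub L).comp (projSub (fixedSubmodule ρ)) =
      (projSub (fixedSubmodule ρ)).comp (projSub L))
    (R : V → ℝ) (hR : ContDiff ℝ 2 R)
    (A : V) (hA : A ∈ fixedSubmodule ρ ⊓ L)
    (Y : V) (hY : Y ∈ L ⊓ (fixedSubmodule ρ ⊓ L)ᗮ) :
    projSub L ((hess (augRisk μ ρ R) A) Y) ∈ L ⊓ (fixedSubmodule ρ ⊓ L)ᗮ :=
  factB_general μ ρ L hcompat R A hA Y hY
end
end

section
/- If R : V → ℝ is continuously differentiable, then the augmented risk R^aug is continuously differentiable and its gradient satisfies ∇R^aug(A) = ∫_G ρ(g)⁻¹ ∇R(ρ(g)A) dμ(g) for every A ∈ V, where ρ(g)⁻¹ = ρ(g)^T is the adjoint of the orthogonal map ρ(g). -/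
open MeasureTheory InnerProductSpace RealInnerProductSpace

noncomputable section

/-! Differentiation under the integral sign: on a compact group the `A`-derivative of
`R (ρ g A)` is continuous in `(g, A)`, hence bounded near any `A₀` uniformly in `g`, and the
chain rule through the isometry `ρ g` pulls the gradient back by its adjoint `(ρ g).symm`. -/

section Gradient

variable {E F : Type*} [NormedAddCommGroup E] [InnerProductSpace ℝ E] [CompleteSpace E]
  [NormedAddCommGroup F] [InnerProductSpace ℝ F] [CompleteSpace F]

theorem HasGradientAt.comp_linearIsometryEquiv {f : F → ℝ} {f' : F} (L : E ≃ₗᵢ[ℝ] F)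
    {x : E} (h : HasGradientAt f f' (L x)) : HasGradientAt (fun y ↦ f (L y)) (L.symm f') x := by
  rw [hasGradientAt_iff_hasFDerivAt] at h ⊢
  refine (h.comp x L.toContinuousLinearEquiv.hasFDerivAt).congr_fderiv ?_
  ext v
  simpa using (L.symm.inner_map_eq_flip f' v).symm

theorem ContDiff.continuous_gradient {f : E → ℝ} (hf : ContDiff ℝ 1 f) :
    Continuous (gradient f) :=
  (toDual ℝ E).symm.continuous.comp (hf.continuous_fderiv one_ne_zero)

theorem contDiff_one_of_hasGradientAt {f : E → ℝ} {f' : E → E}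
    (hf : ∀ x, HasGradientAt f (f' x) x) (hf' : Continuous f') : ContDiff ℝ 1 f := by
  rw [contDiff_one_iff_fderiv, funext fun x ↦ (hf x).hasFDerivAt.fderiv]
  exact ⟨fun x ↦ (hf x).differentiableAt, (toDual ℝ E).continuous.comp hf'⟩

end Gradient

section ParametricIntegral

variable {X H : Type*} [TopologicalSpace X] [CompactSpace X] [MeasurableSpace X]
  [OpensMeasurableSpace X] (μ : Measure X) [IsFiniteMeasure μ]
  [NormedAddCommGroup H] [InnerProductSpace ℝ H] [FiniteDimensional ℝ H]
  {F : H → X → ℝ} {F' : H → X → H}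

theorem hasGradientAt_integral_of_continuous (hF : ∀ x, Continuous (F x))
    (hF' : Continuous (Function.uncurry F'))
    (h_grad : ∀ x a, HasGradientAt (F · a) (F' x a) x) (x₀ : H) :
    HasGradientAt (fun x ↦ ∫ a, F x a ∂μ) (∫ a, F' x₀ a ∂μ) x₀ := by
  have h_compact : IsCompact (Metric.closedBall x₀ 1 ×ˢ Set.univ : Set (H × X)) :=
    (isCompact_closedBall x₀ 1).prod isCompact_univ
  obtain ⟨C, hC⟩ := h_compact.exists_bound_of_continuousOn hF'.continuousOn
  have h_int {f : X → ℝ} (hf : Continuous f) : Integrable f μ :=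
    hf.integrable_of_hasCompactSupport (.of_compactSpace _)
  have h_comm : ∫ a, toDual ℝ H (F' x₀ a) ∂μ = toDual ℝ H (∫ a, F' x₀ a ∂μ) :=
    (toDual ℝ H).toContinuousLinearEquiv.integral_comp_comm _
  rw [hasGradientAt_iff_hasFDerivAt, ← h_comm]
  refine hasFDerivAt_integral_of_dominated_of_fderiv_le (bound := fun _ ↦ C)
    (Metric.closedBall_mem_nhds x₀ one_pos)
    (.of_forall fun x ↦ (h_int (hF x)).aestronglyMeasurable)
    (h_int (hF x₀)) ?_ (.of_forall fun a x hx ↦ ?_) (integrable_const C)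
    (.of_forall fun a x _ ↦ hasGradientAt_iff_hasFDerivAt.mp (h_grad x a))
  · exact ((toDual ℝ H).continuous.comp (hF'.comp (.prodMk_right x₀))).aestronglyMeasurable
  · simpa using hC (x, a) ⟨hx, trivial⟩

theorem contDiff_one_integral_of_continuous (hF : ∀ x, Continuous (F x))
    (hF' : Continuous (Function.uncurry F'))
    (h_grad : ∀ x a, HasGradientAt (F · a) (F' x a) x) :
    ContDiff ℝ 1 (fun x ↦ ∫ a, F x a ∂μ) := by
  refine contDiff_one_of_hasGradientAt (hasGradientAt_integral_of_continuous μ hF hF' h_grad) ?_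
  simpa using continuous_parametric_integral_of_continuous (μ := μ) hF' isCompact_univ

end ParametricIntegral

theorem continuous_symm_apply_of_continuous_apply {G V : Type*} [Group G] [TopologicalSpace G]
    [IsTopologicalGroup G] [NormedAddCommGroup V] [InnerProductSpace ℝ V]
    {ρ : G →* (V ≃ₗᵢ[ℝ] V)} (hρ : Continuous fun p : G × V ↦ ρ p.1 p.2) :
    Continuous fun p : G × V ↦ (ρ p.1).symm p.2 := by
  have h_symm (g : G) (v : V) : (ρ g).symm v = ρ g⁻¹ v := by rw [map_inv]; rfl
  simp_rw [h_symm]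
  exact hρ.comp (continuous_fst.inv.prodMk continuous_snd)

theorem augRisk_contDiff_and_gradient_formula_general
    {G V : Type*} [Group G] [TopologicalSpace G] [IsTopologicalGroup G] [CompactSpace G]
    [MeasurableSpace G] [BorelSpace G]
    [NormedAddCommGroup V] [InnerProductSpace ℝ V] [FiniteDimensional ℝ V]
    (μ : Measure G) [IsProbabilityMeasure μ]
    (ρ : G →* (V ≃ₗᵢ[ℝ] V)) (hρ : Continuous fun p : G × V => ρ p.1 p.2)
    (R : V → ℝ) (hR : ContDiff ℝ 1 R) :
    ContDiff ℝ 1 (augRisk μ ρ R) ∧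
      ∀ A : V, gradient (augRisk μ ρ R) A =
        ∫ g, (ρ g).symm (gradient R (ρ g A)) ∂μ := by
  have h_cont (A : V) : Continuous fun g ↦ R (ρ g A) :=
    hR.continuous.comp (hρ.comp (.prodMk_left A))
  have h_cont' : Continuous (Function.uncurry fun A g ↦ (ρ g).symm (gradient R (ρ g A))) :=
    (continuous_symm_apply_of_continuous_apply hρ).comp
      (continuous_snd.prodMk (hR.continuous_gradient.comp (hρ.comp continuous_swap)))
  have h_grad (A : V) (g : G) :
      HasGradientAt (fun x ↦ R (ρ g x)) ((ρ g).symm (gradient R (ρ g A))) A :=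
    ((hR.differentiable one_ne_zero _).hasGradientAt).comp_linearIsometryEquiv (ρ g)
  exact ⟨contDiff_one_integral_of_continuous μ h_cont h_cont' h_grad,
    fun A ↦ (hasGradientAt_integral_of_continuous μ h_cont h_cont' h_grad A).gradient⟩

/-- If `R` is continuously differentiable then so is the augmented risk
`R^aug`, and `∇R^aug(A) = ∫_G ρ(g)⁻¹ ∇R(ρ(g)A) dμ(g)`. -/
theorem augRisk_contDiff_and_gradient_formula
    {G V : Type*} [Group G] [TopologicalSpace G] [IsTopologicalGroup G] [CompactSpace G]
    [MeasurableSpace G] [BorelSpace G]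
    [NormedAddCommGroup V] [InnerProductSpace ℝ V] [FiniteDimensional ℝ V]
    (μ : Measure G) [μ.IsHaarMeasure] [IsProbabilityMeasure μ]
    (ρ : G →* (V ≃ₗᵢ[ℝ] V)) (hρ : Continuous fun p : G × V => ρ p.1 p.2)
    (R : V → ℝ) (hR : ContDiff ℝ 1 R) :
    ContDiff ℝ 1 (augRisk μ ρ R) ∧
      ∀ A : V, gradient (augRisk μ ρ R) A =
        ∫ g, (ρ g).symm (gradient R (ρ g A)) ∂μ :=
  augRisk_contDiff_and_gradient_formula_general μ ρ hρ R hR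
end
end
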